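/- arXiv:2504.00897 — 2 statements merged into one kernel-verified Lean document; each statement's English description precedes it below -/
import Mathlib

section
/- Let P ⊂ ℝ^d be a full-dimensional simple convex polytope with n facets, normal fan Σ_P, and ray generator matrix U ∈ ℝ^{n×d}. Let Δ ⊆ P be a face of codimension k, let T_Δ be an invertible d×d matrix such that the rows of U·T_Δ indexed by the facets of P containing Δ are e₁,…,e_k, set c_Δ = |det T_Δ|, and let U_Δ be the submatrix of U·T_Δ consisting of the last d−k columns and the rows indexed by facets Q for which Q ∩ Δ is a facet of Δ; U_Δ is a ray matrix for the normal fan of Δ. Then the restriction of Adj_{P,U}(x) to Λ_Δ = {x : x_Q = 0 for all facets Q ⊇ Δ} equals c_Δ^{-1} · (∏_{Q : Q ∩ Δ = ∅} x_Q) · Adj_{Δ,U_Δ}. Moreover, the residue res_{Λ_Δ} Amp_{P,U} := ((∏_{Q ⊇ Δ} x_Q) · Amp_{P,U})|_{Λ_Δ} equals c_Δ^{-1} · Amp_{Δ,U_Δ}. -/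
open MvPolynomial Finset MeasureTheory
open scoped ENNReal

/-- The polyhedral cone spanned by the ray generators (rows of `U`) indexed by `σ`. -/
def coneOf {ι κ : Type*} [Fintype ι] (U : Matrix ι κ ℝ) (σ : Finset ι) : Set (κ → ℝ) :=
  {y | ∃ c : ι → ℝ, (∀ i, 0 ≤ c i) ∧ (∀ i, i ∉ σ → c i = 0) ∧ y = ∑ i, c i • U i}

/-- A simplicial polyhedral fan with rays indexed by `ι`, living in the space `κ → ℝ`.
Since the fan is simplicial, each cone is recorded by its finite set of rays. -/
structure SimplicialFan (ι κ : Type*) [Fintype ι] [DecidableEq ι] where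
  /-- the ray generator matrix: its rows are the chosen ray generators -/
  U : Matrix ι κ ℝ
  /-- the cones of the fan, each recorded by its set of rays -/
  cones : Finset (Finset ι)
  empty_mem : ∅ ∈ cones
  ray_mem : ∀ i : ι, {i} ∈ cones
  downward : ∀ σ ∈ cones, ∀ τ, τ ⊆ σ → τ ∈ cones
  indep : ∀ σ ∈ cones, LinearIndependent ℝ (fun i : σ => U i.1)
  inter : ∀ σ ∈ cones, ∀ τ ∈ cones, coneOf U σ ∩ coneOf U τ = coneOf U (σ ∩ τ)

/-- `|det|` of the square submatrix of `U` on the rows indexed by `σ`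
(zero if `σ` does not have exactly `card κ` elements). -/
noncomputable def absDetRows {ι κ : Type*} [Fintype κ] [DecidableEq κ]
    (U : Matrix ι κ ℝ) (σ : Finset ι) : ℝ :=
  if h : σ.card = Fintype.card κ then
    |(Matrix.of fun j k : κ =>
        U ((σ.equivFin.symm (Fintype.equivFinOfCardEq h.symm j)) : ι) k).det|
  else 0

/-- The universal adjoint polynomial of the fan data `(U, cones)`:
`Adj = ∑_{σ ∈ Σ(d)} |det U_σ| ∏_{ρ ∉ σ(1)} x_ρ`. -/
noncomputable def Adj {ι κ : Type*} [Fintype ι] [DecidableEq ι] [Fintype κ] [DecidableEq κ]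
    (U : Matrix ι κ ℝ) (cones : Finset (Finset ι)) : MvPolynomial ι ℝ :=
  ∑ σ ∈ cones.filter fun σ => σ.card = Fintype.card κ,
    MvPolynomial.C (absDetRows U σ) * ∏ ρ ∈ σᶜ, MvPolynomial.X ρ

/-- The toric amplitude `Amp = ∑_{σ ∈ Σ(d)} |det U_σ| / ∏_{ρ ∈ σ(1)} x_ρ`
as a real-valued function. -/
noncomputable def Amp {ι κ : Type*} [Fintype ι] [DecidableEq ι] [Fintype κ] [DecidableEq κ]
    (U : Matrix ι κ ℝ) (cones : Finset (Finset ι)) (x : ι → ℝ) : ℝ :=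
  ∑ σ ∈ cones.filter fun σ => σ.card = Fintype.card κ, absDetRows U σ / ∏ ρ ∈ σ, x ρ

/-- The toric amplitude with values in `ℝ≥0∞` (for identities with possibly infinite
dual volumes). -/
noncomputable def AmpE {ι κ : Type*} [Fintype ι] [DecidableEq ι] [Fintype κ] [DecidableEq κ]
    (U : Matrix ι κ ℝ) (cones : Finset (Finset ι)) (x : ι → ℝ) : ℝ≥0∞ :=
  ∑ σ ∈ cones.filter fun σ => σ.card = Fintype.card κ,
    ENNReal.ofReal (absDetRows U σ) / ∏ ρ ∈ σ, ENNReal.ofReal (x ρ)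

/-- The toric amplitude as an element of the field of rational functions. -/
noncomputable def AmpFrac {ι κ : Type*} [Fintype ι] [DecidableEq ι] [Fintype κ] [DecidableEq κ]
    (U : Matrix ι κ ℝ) (cones : Finset (Finset ι)) : FractionRing (MvPolynomial ι ℝ) :=
  ∑ σ ∈ cones.filter fun σ => σ.card = Fintype.card κ,
    algebraMap (MvPolynomial ι ℝ) (FractionRing (MvPolynomial ι ℝ)) (MvPolynomial.C (absDetRows U σ)) /
      algebraMap (MvPolynomial ι ℝ) (FractionRing (MvPolynomial ι ℝ)) (∏ ρ ∈ σ, MvPolynomial.X ρ)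

/-- The toric amplitude of fan data whose rays are indexed by a type `α` mapping to `ι`
via `f`, viewed inside the rational function field on the `ι`-variables. -/
noncomputable def AmpFracVia {α ι κ' : Type*} [Fintype α] [DecidableEq α]
    [Fintype κ'] [DecidableEq κ']
    (U' : Matrix α κ' ℝ) (cones' : Finset (Finset α)) (f : α → ι) :
    FractionRing (MvPolynomial ι ℝ) :=
  ∑ σ ∈ cones'.filter fun σ => σ.card = Fintype.card κ',
    algebraMap (MvPolynomial ι ℝ) (FractionRing (MvPolynomial ι ℝ)) (MvPolynomial.C (absDetRows U' σ)) /
      algebraMap (MvPolynomial ι ℝ) (FractionRing (MvPolynomial ι ℝ)) (∏ ρ ∈ σ, MvPolynomial.X (f ρ))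

/-- The polyhedron `P_z = {y : U y + z ≥ 0}`. -/
def Pz {ι κ : Type*} [Fintype κ] (U : Matrix ι κ ℝ) (z : ι → ℝ) : Set (κ → ℝ) :=
  {y | ∀ i, 0 ≤ (∑ j, U i j * y j) + z i}

/-- The face of `P_z` where the inequalities indexed by `τ` are tight. -/
def faceOf {ι κ : Type*} [Fintype κ] (U : Matrix ι κ ℝ) (z : ι → ℝ) (τ : Finset ι) :
    Set (κ → ℝ) :=
  {y | y ∈ Pz U z ∧ ∀ i ∈ τ, (∑ j, U i j * y j) + z i = 0}

/-- `F` is the normal fan of the polytope `P_z`, which is a full-dimensional simple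
(bounded) polytope whose facets are indexed by the rays of `F`: a set of inequalities
spans a cone of the normal fan iff they are simultaneously tight on a nonempty face. -/
def IsNormalFanOf {ι κ : Type*} [Fintype ι] [DecidableEq ι] [Fintype κ]
    (F : SimplicialFan ι κ) (z : ι → ℝ) : Prop :=
  Bornology.IsBounded (Pz F.U z) ∧ (interior (Pz F.U z)).Nonempty ∧
    ∀ σ : Finset ι, σ ∈ F.cones ↔ (faceOf F.U z σ).Nonempty

/-- The polar dual `{u : u ⬝ y ≥ -1 for all y ∈ P}`. -/
def polarDual {κ : Type*} [Fintype κ] (P : Set (κ → ℝ)) : Set (κ → ℝ) :=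
  {u | ∀ y ∈ P, -1 ≤ ∑ j, u j * y j}

/-- Warren's adjoint polynomial `adj_{P_z}(y) = Adj(U y + z)`. -/
noncomputable def warrenAdj {ι κ : Type*} [Fintype ι] [DecidableEq ι] [Fintype κ] [DecidableEq κ]
    (U : Matrix ι κ ℝ) (cones : Finset (Finset ι)) (z : ι → ℝ) : MvPolynomial κ ℝ :=
  MvPolynomial.aeval (fun i : ι => (∑ j, MvPolynomial.C (U i j) * MvPolynomial.X j) + MvPolynomial.C (z i))
    (Adj U cones)

/-- The neighbours `nb(τ)` of a cone `τ`: rays `ρ ∉ τ` with `τ ∪ {ρ}` a cone. -/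
def nbF {ι : Type*} [Fintype ι] [DecidableEq ι] (cones : Finset (Finset ι)) (τ : Finset ι) :
    Finset ι :=
  Finset.univ.filter fun ρ => ρ ∉ τ ∧ insert ρ τ ∈ cones

/-- The rows of `U * T` indexed by `τ` are the first `k` standard basis vectors. -/
def RowsStd {ι : Type*} {d : ℕ} (U : Matrix ι (Fin d) ℝ) (T : Matrix (Fin d) (Fin d) ℝ)
    (τ : Finset ι) (k : ℕ) : Prop :=
  ∃ g : {ρ : ι // ρ ∈ τ} → Fin d, Function.Injective g ∧ (∀ ρ, (g ρ : ℕ) < k) ∧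
    ∀ ρ : {ρ : ι // ρ ∈ τ}, (U * T) ρ.1 = Pi.single (g ρ) 1

/-- The ray matrix of the star fan `Σ_τ`: the last `d-k` columns of `U * T`, on the
rows indexed by `nb(τ)` (here `N`). -/
def starU {ι : Type*} {d : ℕ} (U : Matrix ι (Fin d) ℝ) (T : Matrix (Fin d) (Fin d) ℝ)
    (N : Finset ι) (k : ℕ) : Matrix {ρ : ι // ρ ∈ N} {j : Fin d // k ≤ (j : ℕ)} ℝ :=
  fun ρ j => (U * T) ρ.1 j.1

/-- The cones of the star fan `Σ_τ`, recorded by their sets of rays (as subsets of `N = nb(τ)`). -/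
def starCones {ι : Type*} [DecidableEq ι] (cones : Finset (Finset ι)) (τ : Finset ι)
    (N : Finset ι) : Finset (Finset {ρ : ι // ρ ∈ N}) :=
  (cones.filter fun σ => τ ⊆ σ).image fun σ => (σ \ τ).subtype fun ρ => ρ ∈ N

/-- Restriction of polynomials to the coordinate subspace `Λ_τ = {x_ρ = 0, ρ ∈ τ}`. -/
noncomputable def restrictTo {ι : Type*} {R : Type*} [CommSemiring R] [DecidableEq ι]
    (τ : Finset ι) : MvPolynomial ι R →ₐ[R] MvPolynomial ι R :=
  MvPolynomial.aeval fun ρ => if ρ ∈ τ then 0 else MvPolynomial.X ρ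

/-- The deformation cone of a (complete simplicial) fan: those `x` for which each
"virtual vertex" of `P_x` determined by a maximal cone satisfies all inequalities. -/
def DefCone {ι κ : Type*} [Fintype ι] [DecidableEq ι] [Fintype κ] (F : SimplicialFan ι κ) :
    Set (ι → ℝ) :=
  {x | ∀ σ ∈ F.cones, σ.card = Fintype.card κ →
    ∃ v : κ → ℝ, (∀ ρ ∈ σ, (∑ j, F.U ρ j * v j) + x ρ = 0) ∧
      ∀ ρ : ι, 0 ≤ (∑ j, F.U ρ j * v j) + x ρ}

/-- The `(d+1) × (d+1)` determinant `W_Δ(x)` of the matrix with rows `(u_ρ, x_ρ)`,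
`ρ ∈ S` (defined up to sign; zero if `S` does not have `d+1` elements). -/
noncomputable def Wdet {ι κ : Type*} [Fintype κ] [DecidableEq κ]
    (U : Matrix ι κ ℝ) (S : Finset ι) (x : ι → ℝ) : ℝ :=
  if h : S.card = Fintype.card (Option κ) then
    (Matrix.of fun a b : Option κ =>
      Option.elim b (x ((S.equivFin.symm (Fintype.equivFinOfCardEq h.symm a)) : ι))
        (fun k => U ((S.equivFin.symm (Fintype.equivFinOfCardEq h.symm a)) : ι) k)).det
  else 0

/-!
Restricting to `Λ_τ` kills every monomial `∏_{ρ ∉ σ} x_ρ` of `Adj` with `τ ⊄ σ`; the surviving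
maximal cones `σ ⊇ τ` correspond bijectively, via `σ ↦ σ \ τ`, to the maximal cones of the star
fan. After the change of basis `T` the rows of `U T` indexed by `τ` are standard basis vectors, so
each maximal minor of `U T` on `σ ⊇ τ` is block triangular with an identity block, and
`|det U_σ| = |det T|⁻¹ |det (U_Δ)_{σ \ τ}|`.

The residue statement reduces to the first one: since `Adj = (∏_ρ x_ρ) Amp`, an identity
`p / q = (∏_{ρ ∈ τ} x_ρ) Amp` is the polynomial identity `p ∏_{ρ ∉ τ} x_ρ = Adj q`, which can be
restricted to `Λ_τ`.
-/

section AbsDetRows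

variable {ι κ : Type*} [Fintype κ] [DecidableEq κ]

lemma absDetRows_of_card_ne {U : Matrix ι κ ℝ} {σ : Finset ι} (h : σ.card ≠ Fintype.card κ) :
    absDetRows U σ = 0 :=
  dif_neg h

lemma absDetRows_eq_of_equiv (U : Matrix ι κ ℝ) {σ : Finset ι} (e : κ ≃ σ) :
    absDetRows U σ = |(U.submatrix (fun j => (e j : ι)) id).det| := by
  have h : σ.card = Fintype.card κ := by rw [← Fintype.card_coe, Fintype.card_congr e]
  set e₀ : κ ≃ σ := (Fintype.equivFinOfCardEq h.symm).trans σ.equivFin.symm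
  rw [absDetRows, dif_pos h,
    ← Matrix.abs_det_submatrix_equiv_equiv (e.trans e₀.symm) (Equiv.refl κ)]
  congr 3
  ext j c
  simp [e₀]

lemma absDetRows_mul (U : Matrix ι κ ℝ) (T : Matrix κ κ ℝ) (σ : Finset ι) :
    absDetRows (U * T) σ = absDetRows U σ * |T.det| := by
  by_cases h : σ.card = Fintype.card κ
  · let e : κ ≃ σ := Fintype.equivOfCardEq (by rw [Fintype.card_coe, h])
    rw [absDetRows_eq_of_equiv _ e, absDetRows_eq_of_equiv _ e, ← abs_mul, ← Matrix.det_mul]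
    rfl
  · simp [absDetRows_of_card_ne h]

lemma absDetRows_subtype (U : Matrix ι κ ℝ) {p : ι → Prop} [DecidablePred p] {σ : Finset ι}
    (hσ : ∀ i ∈ σ, p i) :
    absDetRows (U.submatrix (Subtype.val : {i // p i} → ι) id) (σ.subtype p) =
      absDetRows U σ := by
  let r : σ.subtype p ≃ σ :=
    { toFun i := ⟨i.1.1, Finset.mem_subtype.1 i.2⟩
      invFun i := ⟨⟨i.1, hσ _ i.2⟩, Finset.mem_subtype.2 i.2⟩
      left_inv _ := rfl
      right_inv _ := rfl }
  by_cases h : σ.card = Fintype.card κ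
  · let e : κ ≃ σ.subtype p :=
      Fintype.equivOfCardEq (by rw [Fintype.card_congr r, Fintype.card_coe, h])
    rw [absDetRows_eq_of_equiv _ e, absDetRows_eq_of_equiv _ (e.trans r)]
    rfl
  · rw [absDetRows_of_card_ne h, absDetRows_of_card_ne]
    rwa [← Fintype.card_coe, Fintype.card_congr r, Fintype.card_coe]

end AbsDetRows

lemma card_union_eq_card_iff {ι κ : Type*} [DecidableEq ι] [Fintype κ] (q : κ → Prop)
    [DecidablePred q] {τ ρ : Finset ι} (hτρ : Disjoint τ ρ)
    (hτ : τ.card = Fintype.card {j // ¬ q j}) :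
    (τ ∪ ρ).card = Fintype.card κ ↔ ρ.card = Fintype.card {j // q j} := by
  rw [Finset.card_union_of_disjoint hτρ, hτ, Fintype.card_subtype_compl]
  have := Fintype.card_subtype_le q
  omega

lemma absDetRows_union_of_rows_single {ι κ : Type*} [DecidableEq ι] [Fintype κ] [DecidableEq κ]
    {M : Matrix ι κ ℝ} (q : κ → Prop) [DecidablePred q] {τ ρ : Finset ι} (hτρ : Disjoint τ ρ)
    (g : τ ≃ {j // ¬ q j}) (hg : ∀ i : τ, M i = Pi.single (g i : κ) 1) :
    absDetRows M (τ ∪ ρ) = absDetRows (M.submatrix id (Subtype.val : {j // q j} → κ)) ρ := by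
  have hτ : τ.card = Fintype.card {j // ¬ q j} := by rw [← Fintype.card_coe, Fintype.card_congr g]
  by_cases h : ρ.card = Fintype.card {j // q j}
  · let f : {j // q j} ≃ ρ := Fintype.equivOfCardEq (by rw [Fintype.card_coe, h])
    let e : κ ≃ ↥(τ ∪ ρ) := (Equiv.sumCompl q).symm.trans
      (((Equiv.sumCongr f g.symm).trans (Equiv.sumComm _ _)).trans (Equiv.Finset.union τ ρ hτρ))
    have he_pos : ∀ j (hj : q j), (e j : ι) = f ⟨j, hj⟩ := fun j hj => by
      simp [e, Equiv.sumCompl_symm_apply_of_pos hj]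
    have he_neg : ∀ j (hj : ¬ q j), (e j : ι) = g.symm ⟨j, hj⟩ := fun j hj => by
      simp [e, Equiv.sumCompl_symm_apply_of_neg hj]
    have hupper : ∀ i, ¬ q i → ∀ j, q j → M.submatrix (fun j => (e j : ι)) id i j = 0 := by
      intro i hi j hj
      simp only [Matrix.submatrix_apply, id, he_neg i hi, hg, Equiv.apply_symm_apply]
      exact Pi.single_eq_of_ne (fun hji : j = i => hi (hji ▸ hj)) _
    have hidentity :
        (M.submatrix (fun j => (e j : ι)) id).toSquareBlockProp (fun j => ¬ q j) = 1 := by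
      ext i j
      simp only [Matrix.toSquareBlockProp, Matrix.toBlock_apply, Matrix.submatrix_apply, id,
        he_neg i i.2, hg, Equiv.apply_symm_apply, Matrix.one_apply, Pi.single_apply,
        Subtype.ext_iff, eq_comm]
    rw [absDetRows_eq_of_equiv _ e, absDetRows_eq_of_equiv _ f,
      Matrix.twoBlockTriangular_det _ q hupper, hidentity, Matrix.det_one, mul_one]
    congr 3
    ext i j
    simp [Matrix.toSquareBlockProp, he_pos i i.2]
  · rw [absDetRows_of_card_ne h, absDetRows_of_card_ne]
    rwa [Ne, card_union_eq_card_iff q hτρ hτ]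

lemma RowsStd.exists_equiv {ι : Type*} {d k : ℕ} {U : Matrix ι (Fin d) ℝ}
    {T : Matrix (Fin d) (Fin d) ℝ} {τ : Finset ι} (hT : RowsStd U T τ k) (hk : τ.card = k) :
    ∃ g : τ ≃ {j : Fin d // ¬ k ≤ (j : ℕ)}, ∀ i : τ, (U * T) i = Pi.single (g i : Fin d) 1 := by
  obtain ⟨g, hg_inj, hg_lt, hg⟩ := hT
  let g' : τ → {j : Fin d // ¬ k ≤ (j : ℕ)} := fun i => ⟨g i, not_le.2 (hg_lt i)⟩
  have hg'_inj : Function.Injective g' := fun a b hab => hg_inj (congrArg Subtype.val hab)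
  have hcard_le : Fintype.card {j : Fin d // ¬ k ≤ (j : ℕ)} ≤ Fintype.card τ := by
    rw [Fintype.card_coe, hk]
    exact (Fintype.card_le_of_injective (β := Fin k) (fun j => ⟨j.1, not_le.1 j.2⟩)
      fun a b hab => Subtype.ext (Fin.ext (Fin.mk.inj_iff.1 hab))).trans_eq (Fintype.card_fin k)
  have hbij : Function.Bijective g' := (Fintype.bijective_iff_injective_and_card g').2
    ⟨hg'_inj, le_antisymm (Fintype.card_le_of_injective g' hg'_inj) hcard_le⟩
  exact ⟨Equiv.ofBijective g' hbij, hg⟩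

/-- The cone of the star fan `Σ_τ` induced by a cone `σ ⊇ τ`. -/
def starRays {ι : Type*} [DecidableEq ι] (τ N σ : Finset ι) : Finset {ρ : ι // ρ ∈ N} :=
  (σ \ τ).subtype (· ∈ N)

lemma starCones_eq_image {ι : Type*} [DecidableEq ι] (cones : Finset (Finset ι))
    (τ N : Finset ι) : starCones cones τ N = (cones.filter (τ ⊆ ·)).image (starRays τ N) :=
  rfl

lemma card_starRays {ι : Type*} [DecidableEq ι] {τ N σ : Finset ι} (hσN : σ \ τ ⊆ N) :
    (starRays τ N σ).card = (σ \ τ).card := by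
  rw [starRays, Finset.card_subtype, Finset.filter_true_of_mem fun _ h => hσN h]

lemma union_map_starRays {ι : Type*} [DecidableEq ι] {τ N σ : Finset ι} (hτσ : τ ⊆ σ)
    (hσN : σ \ τ ⊆ N) :
    τ ∪ (starRays τ N σ).map (Function.Embedding.subtype _) = σ := by
  rw [starRays, Finset.subtype_map, Finset.filter_true_of_mem fun _ h => hσN h,
    Finset.union_sdiff_of_subset hτσ]

lemma absDetRows_eq_inv_mul_starU {ι : Type*} [DecidableEq ι] {d k : ℕ}
    {U : Matrix ι (Fin d) ℝ} {T : Matrix (Fin d) (Fin d) ℝ} (hdet : T.det ≠ 0) {τ N σ : Finset ι}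
    (g : τ ≃ {j : Fin d // ¬ k ≤ (j : ℕ)}) (hg : ∀ i : τ, (U * T) i = Pi.single (g i : Fin d) 1)
    (hτσ : τ ⊆ σ) (hσN : σ \ τ ⊆ N) :
    absDetRows U σ = |T.det|⁻¹ * absDetRows (starU U T N k) (starRays τ N σ) := by
  have hstar : absDetRows (starU U T N k) (starRays τ N σ) = absDetRows (U * T) σ := by
    change absDetRows (((U * T).submatrix id Subtype.val).submatrix Subtype.val id) _ = _
    rw [starRays, absDetRows_subtype _ fun _ h => hσN h,
      ← absDetRows_union_of_rows_single (fun j : Fin d => k ≤ (j : ℕ)) Finset.disjoint_sdiff g hg,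
      Finset.union_sdiff_of_subset hτσ]
  rw [hstar, absDetRows_mul]
  field_simp

section Restriction

variable {ι : Type*} [DecidableEq ι]

lemma restrictTo_X {R : Type*} [CommSemiring R] (τ : Finset ι) (ρ : ι) :
    restrictTo τ (X ρ : MvPolynomial ι R) = if ρ ∈ τ then 0 else X ρ :=
  aeval_X _ _

lemma restrictTo_C {R : Type*} [CommSemiring R] (τ : Finset ι) (c : R) :
    restrictTo τ (C c : MvPolynomial ι R) = C c :=
  aeval_C _ _

lemma restrictTo_prod_X_of_disjoint {R : Type*} [CommSemiring R] {τ s : Finset ι}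
    (h : Disjoint s τ) :
    restrictTo τ (∏ ρ ∈ s, X ρ : MvPolynomial ι R) = ∏ ρ ∈ s, X ρ := by
  rw [map_prod]
  exact Finset.prod_congr rfl fun ρ hρ => by
    rw [restrictTo_X, if_neg (Finset.disjoint_left.1 h hρ)]

lemma restrictTo_prod_X_compl {R : Type*} [CommSemiring R] [Fintype ι] (τ σ : Finset ι) :
    restrictTo τ (∏ ρ ∈ σᶜ, X ρ : MvPolynomial ι R) = if τ ⊆ σ then ∏ ρ ∈ σᶜ, X ρ else 0 := by
  split_ifs with h
  · exact restrictTo_prod_X_of_disjoint (disjoint_compl_left_iff.2 h)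
  · obtain ⟨ρ, hρτ, hρσ⟩ := Finset.not_subset.1 h
    rw [map_prod]
    exact Finset.prod_eq_zero (Finset.mem_compl.2 hρσ) (by rw [restrictTo_X, if_pos hρτ])

lemma restrictTo_Adj [Fintype ι] {κ : Type*} [Fintype κ] [DecidableEq κ] (U : Matrix ι κ ℝ)
    (cones : Finset (Finset ι)) (τ : Finset ι) :
    restrictTo τ (Adj U cones) =
      ∑ σ ∈ (cones.filter (τ ⊆ ·)).filter (·.card = Fintype.card κ),
        C (absDetRows U σ) * ∏ ρ ∈ σᶜ, X ρ := by
  rw [Adj, map_sum, Finset.filter_comm, Finset.sum_filter (τ ⊆ ·)]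
  refine Finset.sum_congr rfl fun σ _ => ?_
  rw [map_mul, restrictTo_C, restrictTo_prod_X_compl]
  split_ifs <;> simp

lemma prod_X_compl_eq_mul_rename_starRays {R : Type*} [CommSemiring R] [Fintype ι]
    {τ N σ : Finset ι} (hNτ : Disjoint N τ) (hτσ : τ ⊆ σ) (hσN : σ \ τ ⊆ N) :
    (∏ ρ ∈ σᶜ, X ρ : MvPolynomial ι R) =
      (∏ ρ ∈ (N ∪ τ)ᶜ, X ρ) * rename Subtype.val (∏ ρ ∈ (starRays τ N σ)ᶜ, X ρ) := by
  have hmap : (starRays τ N σ)ᶜ.map (Function.Embedding.subtype (· ∈ N)) = N \ σ := by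
    ext ρ
    simp only [starRays, Finset.mem_map, Finset.mem_compl, Finset.mem_subtype, Finset.mem_sdiff,
      Function.Embedding.coe_subtype, Subtype.exists, exists_and_right, exists_eq_right,
      exists_prop]
    have : ρ ∈ N → ρ ∉ τ := fun h => Finset.disjoint_left.1 hNτ h
    tauto
  have hsplit : σᶜ = (N ∪ τ)ᶜ ∪ N \ σ := by
    ext ρ
    have := @hσN ρ
    simp only [Finset.mem_compl, Finset.mem_union, Finset.mem_sdiff] at this ⊢
    have := @hτσ ρ
    tauto
  rw [map_prod, hsplit, Finset.prod_union, ← hmap, Finset.prod_map]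
  · simp
  · exact Finset.disjoint_left.2 fun ρ h1 h2 =>
      Finset.mem_compl.1 h1 (Finset.mem_union_left _ (Finset.mem_sdiff.1 h2).1)

lemma prod_X_compl_eq_mul_prod_X {R : Type*} [CommSemiring R] [Fintype ι] {τ N : Finset ι}
    (hNτ : Disjoint N τ) :
    (∏ ρ ∈ τᶜ, X ρ : MvPolynomial ι R) = (∏ ρ ∈ (N ∪ τ)ᶜ, X ρ) * ∏ ρ : N, X ρ.1 := by
  simpa [starRays, Finset.subtype_eq_empty.2 fun _ _ => Finset.notMem_empty _] using
    prod_X_compl_eq_mul_rename_starRays (R := R) hNτ subset_rfl (by simp)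

end Restriction

theorem restrictTo_Adj_eq_rename_starAdj {ι : Type*} [Fintype ι] [DecidableEq ι] {d k : ℕ}
    (U : Matrix ι (Fin d) ℝ) (cones : Finset (Finset ι)) {T : Matrix (Fin d) (Fin d) ℝ}
    (hdet : T.det ≠ 0) {τ N : Finset ι} (g : τ ≃ {j : Fin d // ¬ k ≤ (j : ℕ)})
    (hg : ∀ i : τ, (U * T) i = Pi.single (g i : Fin d) 1) (hNτ : Disjoint N τ)
    (hsub : ∀ σ ∈ cones, τ ⊆ σ → σ \ τ ⊆ N) :
    restrictTo τ (Adj U cones) = C |T.det|⁻¹ * (∏ ρ ∈ (N ∪ τ)ᶜ, X ρ) *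
      rename Subtype.val (Adj (starU U T N k) (starCones cones τ N)) := by
  set S := cones.filter (τ ⊆ ·)
  have hS : ∀ σ ∈ S, τ ⊆ σ ∧ σ \ τ ⊆ N := fun σ hσ => by
    obtain ⟨hσ, hτσ⟩ := Finset.mem_filter.1 hσ
    exact ⟨hτσ, hsub σ hσ hτσ⟩
  have hτ : τ.card = Fintype.card {j : Fin d // ¬ k ≤ (j : ℕ)} := by
    rw [← Fintype.card_coe, Fintype.card_congr g]
  have hfilter : S.filter (·.card = Fintype.card (Fin d)) =
      S.filter fun σ => (starRays τ N σ).card = Fintype.card {j : Fin d // k ≤ (j : ℕ)} := by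
    refine Finset.filter_congr fun σ hσ => ?_
    obtain ⟨hτσ, hσN⟩ := hS σ hσ
    rw [card_starRays hσN, ← card_union_eq_card_iff _ Finset.disjoint_sdiff hτ,
      Finset.union_sdiff_of_subset hτσ]
  rw [restrictTo_Adj, Adj, starCones_eq_image, Finset.filter_image, Finset.sum_image, map_sum,
    Finset.mul_sum, hfilter]
  · refine Finset.sum_congr rfl fun σ hσ => ?_
    obtain ⟨hτσ, hσN⟩ := hS σ (Finset.mem_of_mem_filter _ hσ)
    rw [absDetRows_eq_inv_mul_starU hdet g hg hτσ hσN,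
      prod_X_compl_eq_mul_rename_starRays hNτ hτσ hσN]
    simp only [map_mul, rename_C]
    ring
  · intro σ₁ h₁ σ₂ h₂ h
    obtain ⟨hτσ₁, hσ₁N⟩ := hS σ₁ (Finset.mem_of_mem_filter _ h₁)
    obtain ⟨hτσ₂, hσ₂N⟩ := hS σ₂ (Finset.mem_of_mem_filter _ h₂)
    rw [← union_map_starRays hτσ₁ hσ₁N, ← union_map_starRays hτσ₂ hσ₂N, h]

section Amplitude

variable {ι : Type*}

lemma algebraMap_prod_X_ne_zero {α : Type*} (s : Finset α) (f : α → ι) :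
    algebraMap (MvPolynomial ι ℝ) (FractionRing (MvPolynomial ι ℝ)) (∏ a ∈ s, X (f a)) ≠ 0 :=
  (map_ne_zero_iff _ (IsFractionRing.injective _ _)).2
    (Finset.prod_ne_zero_iff.2 fun _ _ => X_ne_zero _)

lemma algebraMap_rename_Adj {α κ : Type*} [Fintype α] [DecidableEq α] [Fintype κ]
    [DecidableEq κ] (U : Matrix α κ ℝ) (cones : Finset (Finset α)) (f : α → ι) :
    algebraMap (MvPolynomial ι ℝ) (FractionRing (MvPolynomial ι ℝ)) (rename f (Adj U cones)) =
      algebraMap (MvPolynomial ι ℝ) _ (∏ a, X (f a)) * AmpFracVia U cones f := by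
  rw [Adj, AmpFracVia, map_sum, map_sum, Finset.mul_sum]
  refine Finset.sum_congr rfl fun σ _ => ?_
  rw [← Finset.prod_mul_prod_compl σ, mul_div_assoc', eq_div_iff (algebraMap_prod_X_ne_zero σ f)]
  simp only [map_mul, map_prod, rename_C, rename_X]
  ring

lemma algebraMap_Adj [Fintype ι] [DecidableEq ι] {κ : Type*} [Fintype κ] [DecidableEq κ]
    (U : Matrix ι κ ℝ) (cones : Finset (Finset ι)) :
    algebraMap (MvPolynomial ι ℝ) (FractionRing (MvPolynomial ι ℝ)) (Adj U cones) =
      algebraMap (MvPolynomial ι ℝ) _ (∏ ρ, X ρ) * AmpFrac U cones := by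
  have h := algebraMap_rename_Adj U cones id
  rw [rename_id_apply] at h
  exact h

lemma mul_prod_X_compl_eq_Adj_mul [Fintype ι] [DecidableEq ι] {κ : Type*} [Fintype κ]
    [DecidableEq κ] {U : Matrix ι κ ℝ} {cones : Finset (Finset ι)} {τ : Finset ι}
    {p q : MvPolynomial ι ℝ} (hq : q ≠ 0)
    (h : algebraMap (MvPolynomial ι ℝ) (FractionRing (MvPolynomial ι ℝ)) p / algebraMap _ _ q =
      (∏ ρ ∈ τ, algebraMap (MvPolynomial ι ℝ) _ (X ρ)) * AmpFrac U cones) :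
    p * ∏ ρ ∈ τᶜ, X ρ = Adj U cones * q := by
  have hq' : algebraMap (MvPolynomial ι ℝ) (FractionRing (MvPolynomial ι ℝ)) q ≠ 0 :=
    (map_ne_zero_iff _ (IsFractionRing.injective _ _)).2 hq
  apply IsFractionRing.injective (MvPolynomial ι ℝ) (FractionRing (MvPolynomial ι ℝ))
  rw [div_eq_iff hq'] at h
  rw [map_mul, map_mul, algebraMap_Adj, ← Finset.prod_mul_prod_compl τ]
  simp only [map_mul, map_prod]
  linear_combination
    (∏ ρ ∈ τᶜ, algebraMap (MvPolynomial ι ℝ) (FractionRing (MvPolynomial ι ℝ)) (X ρ)) * h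

end Amplitude

lemma disjoint_nbF {ι : Type*} [Fintype ι] [DecidableEq ι] (cones : Finset (Finset ι))
    (τ : Finset ι) : Disjoint (nbF cones τ) τ :=
  Finset.disjoint_left.2 fun _ h => (Finset.mem_filter.1 h).2.1

lemma SimplicialFan.sdiff_subset_nbF {ι κ : Type*} [Fintype ι] [DecidableEq ι]
    (F : SimplicialFan ι κ) {τ σ : Finset ι} (hσ : σ ∈ F.cones) (hτσ : τ ⊆ σ) :
    σ \ τ ⊆ nbF F.cones τ := fun ρ hρ =>
  have hρ := Finset.mem_sdiff.1 hρ
  Finset.mem_filter.2 ⟨Finset.mem_univ _, hρ.2,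
    F.downward σ hσ (insert ρ τ) (Finset.insert_subset hρ.1 hτσ)⟩

theorem statement2_general {ι : Type*} [Fintype ι] [DecidableEq ι] {d k : ℕ}
    (F : SimplicialFan ι (Fin d))
    (τ : Finset ι) (hcard : τ.card = k)
    (T : Matrix (Fin d) (Fin d) ℝ) (hdet : T.det ≠ 0) (hT : RowsStd F.U T τ k) :
    (restrictTo τ (Adj F.U F.cones) =
      MvPolynomial.C |T.det|⁻¹ * (∏ ρ ∈ (nbF F.cones τ ∪ τ)ᶜ, MvPolynomial.X ρ) *
        MvPolynomial.rename Subtype.val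
          (Adj (starU F.U T (nbF F.cones τ) k) (starCones F.cones τ (nbF F.cones τ)))) ∧
    ∀ p q : MvPolynomial ι ℝ, restrictTo τ q ≠ 0 →
      algebraMap (MvPolynomial ι ℝ) (FractionRing (MvPolynomial ι ℝ)) p /
          algebraMap (MvPolynomial ι ℝ) (FractionRing (MvPolynomial ι ℝ)) q =
        (∏ ρ ∈ τ, algebraMap (MvPolynomial ι ℝ) (FractionRing (MvPolynomial ι ℝ))
            (MvPolynomial.X ρ)) * AmpFrac F.U F.cones →
      algebraMap (MvPolynomial ι ℝ) (FractionRing (MvPolynomial ι ℝ)) (restrictTo τ p) =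
        algebraMap (MvPolynomial ι ℝ) (FractionRing (MvPolynomial ι ℝ)) (restrictTo τ q) *
          (algebraMap (MvPolynomial ι ℝ) (FractionRing (MvPolynomial ι ℝ))
              (MvPolynomial.C |T.det|⁻¹) *
            AmpFracVia (starU F.U T (nbF F.cones τ) k) (starCones F.cones τ (nbF F.cones τ))
              Subtype.val) := by
  obtain ⟨g, hg⟩ := hT.exists_equiv hcard
  have hNτ := disjoint_nbF F.cones τ
  have hAdj := restrictTo_Adj_eq_rename_starAdj F.U F.cones hdet g hg hNτ
    fun σ hσ hτσ => F.sdiff_subset_nbF hσ hτσ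
  refine ⟨hAdj, fun p q hq h => ?_⟩
  have hpq := congrArg (restrictTo τ) (mul_prod_X_compl_eq_Adj_mul (ne_of_apply_ne _ hq) h)
  rw [map_mul, map_mul, restrictTo_prod_X_of_disjoint disjoint_compl_left, hAdj] at hpq
  refine mul_right_cancel₀ (algebraMap_prod_X_ne_zero τᶜ fun ρ => ρ) ?_
  rw [← map_mul, hpq, prod_X_compl_eq_mul_prod_X hNτ]
  simp only [map_mul, algebraMap_rename_Adj]
  ring

/-- (Restriction and residue along a face of a simple polytope.)
Let `P` be a full-dimensional simple polytope with normal fan `Σ` and let `Δ` be the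
face of `P` of codimension `k` whose normal cone is `τ ∈ Σ(k)`; the facets containing
`Δ` are indexed by `τ` and the facets `Q` with `Q ∩ Δ` a facet of `Δ` are indexed by
`nb(τ)`. With `T_Δ`, `c_Δ = |det T_Δ|` and `U_Δ` as in the restriction lemma:
the restriction of `Adj_P` to `Λ_Δ` is `c_Δ⁻¹ (∏_{Q ∩ Δ = ∅} x_Q) Adj_{Δ,U_Δ}`, and
the residue of `Amp_P` along `Λ_Δ` (computed on any representation `p/q` of
`(∏_{Q ⊇ Δ} x_Q)·Amp_P` whose denominator survives restriction) is `c_Δ⁻¹·Amp_{Δ,U_Δ}`. -/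
theorem statement2 {ι : Type*} [Fintype ι] [DecidableEq ι] {d k : ℕ}
    (F : SimplicialFan ι (Fin d)) (hrank : F.U.rank = d)
    (z : ι → ℝ) (hz : IsNormalFanOf F z)
    (τ : Finset ι) (hτ : τ ∈ F.cones) (hcard : τ.card = k)
    (T : Matrix (Fin d) (Fin d) ℝ) (hdet : T.det ≠ 0) (hT : RowsStd F.U T τ k) :
    (restrictTo τ (Adj F.U F.cones) =
      MvPolynomial.C |T.det|⁻¹ * (∏ ρ ∈ (nbF F.cones τ ∪ τ)ᶜ, MvPolynomial.X ρ) *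
        MvPolynomial.rename Subtype.val
          (Adj (starU F.U T (nbF F.cones τ) k) (starCones F.cones τ (nbF F.cones τ)))) ∧
    ∀ p q : MvPolynomial ι ℝ, restrictTo τ q ≠ 0 →
      algebraMap (MvPolynomial ι ℝ) (FractionRing (MvPolynomial ι ℝ)) p /
          algebraMap (MvPolynomial ι ℝ) (FractionRing (MvPolynomial ι ℝ)) q =
        (∏ ρ ∈ τ, algebraMap (MvPolynomial ι ℝ) (FractionRing (MvPolynomial ι ℝ))
            (MvPolynomial.X ρ)) * AmpFrac F.U F.cones →
      algebraMap (MvPolynomial ι ℝ) (FractionRing (MvPolynomial ι ℝ)) (restrictTo τ p) =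
        algebraMap (MvPolynomial ι ℝ) (FractionRing (MvPolynomial ι ℝ)) (restrictTo τ q) *
          (algebraMap (MvPolynomial ι ℝ) (FractionRing (MvPolynomial ι ℝ))
              (MvPolynomial.C |T.det|⁻¹) *
            AmpFracVia (starU F.U T (nbF F.cones τ) k) (starCones F.cones τ (nbF F.cones τ))
              Subtype.val) :=
  statement2_general F τ hcard T hdet hT
end

section
/- Let Σ be a simplicial polyhedral fan in ℝ^d with n rays and ray matrix U ∈ ℝ^{n×d} of rank d, and let Σ̄ ⊆ Σ be the subfan consisting of all d-dimensional cones of Σ and their faces, with ray matrix Ū the submatrix of U indexed by Σ̄(1). Then Adj_{Σ,U} = (∏_{ρ ∈ Σ(1)∖Σ̄(1)} x_ρ) · Adj_{Σ̄,Ū}, and the hypersurface A_Σ contains the union (∪_{ρ ∈ Σ(1)∖Σ̄(1)} Λ_ρ) ∪ V(B(Σ̄)); that is, [Λ_ρ] ∈ F_{n−2}(A_Σ) for every ρ ∈ Σ(1)∖Σ̄(1), and [Λ_J] ∈ F_{n−1−|J|}(A_Σ) for every J ∈ Σ̄^c. -/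
open MvPolynomial Finset MeasureTheory
open scoped ENNReal

/-!
A maximal cone `σ` of `Σ` has exactly `d` rays, all of them in `Σ̄(1)`, so its monomial
`∏_{ρ ∉ σ} x_ρ` splits as `∏_{ρ ∉ Σ̄(1)} x_ρ` times the monomial of `σ` in `Adj_{Σ̄,Ū}`, with the
same determinant. Conversely a cone whose trace on `Σ̄(1)` has `d` rays is itself maximal,
since no cone has more than `d` (linearly independent) rays. The vanishing statements hold
term by term: on `Λ_ρ` with `ρ ∉ Σ̄(1)`, and on `Λ_J` with `J` in no maximal cone, every
monomial `∏_{ρ ∉ σ} x_ρ` contains a vanishing variable.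
-/

lemma SimplicialFan.card_le_of_mem {ι κ : Type*} [Fintype ι] [DecidableEq ι] [Fintype κ]
    (F : SimplicialFan ι κ) {σ : Finset ι} (hσ : σ ∈ F.cones) : σ.card ≤ Fintype.card κ := by
  simpa [Module.finrank_pi] using (F.indep σ hσ).fintype_card_le_finrank

lemma absDetRows_congr {ι ι' κ : Type*} [Fintype κ] [DecidableEq κ]
    (U : Matrix ι κ ℝ) (U' : Matrix ι' κ ℝ) (σ : Finset ι) (σ' : Finset ι')
    (w : σ' ≃ σ) (hw : ∀ x : σ', U' x = U (w x)) :
    absDetRows U' σ' = absDetRows U σ := by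
  have hcard : σ'.card = σ.card := by simpa using Fintype.card_congr w
  unfold absDetRows
  by_cases h : σ.card = Fintype.card κ
  · rw [dif_pos h, dif_pos (hcard.trans h)]
    set E : κ ≃ σ := (Fintype.equivFinOfCardEq h.symm).trans σ.equivFin.symm
    set E' : κ ≃ σ' := (Fintype.equivFinOfCardEq (hcard.trans h).symm).trans σ'.equivFin.symm
    have hrows : (Matrix.of fun j k : κ => U' (E' j) k)
        = (Matrix.of fun j k : κ => U (E j) k).submatrix ((E'.trans w).trans E.symm)
            (Equiv.refl κ) := by
      ext j k
      simp [hw]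
    change |(Matrix.of fun j k : κ => U' (E' j) k).det|
      = |(Matrix.of fun j k : κ => U (E j) k).det|
    rw [hrows, Matrix.abs_det_submatrix_equiv_equiv]
  · rw [dif_neg h, dif_neg (hcard ▸ h)]

lemma Finset.map_subtype_compl_subtype {ι : Type*} [DecidableEq ι] (R : Finset ι) [Fintype R]
    (σ : Finset ι) :
    (σ.subtype (· ∈ R))ᶜ.map (Function.Embedding.subtype (· ∈ R)) = R \ σ := by
  ext ρ
  simp [and_comm]

lemma Finset.filter_card_image_subtype {ι : Type*} [DecidableEq ι] (cones : Finset (Finset ι))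
    (R : Finset ι) (d : ℕ) (hcard : ∀ σ ∈ cones, σ.card ≤ d)
    (hR : ∀ σ ∈ cones, σ.card = d → σ ⊆ R) :
    (cones.image (·.subtype (· ∈ R))).filter (·.card = d)
      = (cones.filter (·.card = d)).image (·.subtype (· ∈ R)) := by
  ext t
  simp only [Finset.mem_filter, Finset.mem_image]
  constructor
  · rintro ⟨⟨σ, hσ, rfl⟩, ht⟩
    have : (σ.subtype (· ∈ R)).card ≤ σ.card := by
      rw [Finset.card_subtype]; exact Finset.card_filter_le _ _
    exact ⟨σ, ⟨hσ, le_antisymm (hcard σ hσ) (ht ▸ this)⟩, rfl⟩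
  · rintro ⟨σ, ⟨hσ, hσd⟩, rfl⟩
    refine ⟨⟨σ, hσ, rfl⟩, ?_⟩
    rw [Finset.card_subtype, Finset.filter_true_of_mem (hR σ hσ hσd), hσd]

section Adj

variable {ι κ : Type*} [Fintype ι] [DecidableEq ι] [Fintype κ] [DecidableEq κ]

lemma aeval_Adj_eq_zero {A : Type*} [CommSemiring A] [Algebra ℝ A]
    (U : Matrix ι κ ℝ) (cones : Finset (Finset ι)) (x : ι → A)
    (hx : ∀ σ ∈ cones, σ.card = Fintype.card κ → ∃ ρ ∉ σ, x ρ = 0) :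
    aeval x (Adj U cones) = 0 := by
  rw [Adj, map_sum]
  refine Finset.sum_eq_zero fun σ hσ => ?_
  obtain ⟨hσ, hσd⟩ := Finset.mem_filter.1 hσ
  obtain ⟨ρ, hρσ, hxρ⟩ := hx σ hσ hσd
  rw [map_mul, map_prod, Finset.prod_eq_zero (Finset.mem_compl.2 hρσ) (by simp [hxρ]), mul_zero]

lemma Adj_eq_prod_compl_mul_rename (U : Matrix ι κ ℝ) (cones : Finset (Finset ι)) (R : Finset ι)
    [Fintype R] (hcard : ∀ σ ∈ cones, σ.card ≤ Fintype.card κ)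
    (hR : ∀ σ ∈ cones, σ.card = Fintype.card κ → σ ⊆ R) :
    Adj U cones = (∏ ρ ∈ Rᶜ, X ρ) *
      rename Subtype.val (Adj (fun (ρ : R) (j : κ) => U ρ j) (cones.image (·.subtype (· ∈ R)))) := by
  have hinj : Set.InjOn (·.subtype (· ∈ R))
      (cones.filter (·.card = Fintype.card κ) : Set (Finset ι)) := by
    intro σ hσ τ hτ hστ
    simp only [Finset.mem_coe, Finset.mem_filter] at hσ hτ
    rw [← Finset.subtype_map_of_mem (hR σ hσ.1 hσ.2), ← Finset.subtype_map_of_mem (hR τ hτ.1 hτ.2)]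
    exact congrArg _ hστ
  unfold Adj
  rw [Finset.filter_card_image_subtype cones R _ hcard hR, Finset.sum_image hinj,
    map_sum, Finset.mul_sum]
  refine Finset.sum_congr rfl fun σ hσ => ?_
  obtain ⟨hσ, hσd⟩ := Finset.mem_filter.1 hσ
  have hσR := hR σ hσ hσd
  have hdet : absDetRows (fun (ρ : R) (j : κ) => U ρ j) (σ.subtype (· ∈ R)) = absDetRows U σ :=
    absDetRows_congr U _ σ _
      ⟨fun x => ⟨x.1.1, Finset.mem_subtype.1 x.2⟩,
        fun y => ⟨⟨y.1, hσR y.2⟩, Finset.mem_subtype.2 y.2⟩, fun _ => rfl, fun _ => rfl⟩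
      fun _ => rfl
  have hprod : rename Subtype.val (∏ ρ ∈ (σ.subtype (· ∈ R))ᶜ, X ρ : MvPolynomial R ℝ)
      = ∏ ρ ∈ R \ σ, (X ρ : MvPolynomial ι ℝ) := by
    rw [map_prod, ← Finset.map_subtype_compl_subtype, Finset.prod_map]
    simp
  rw [map_mul, rename_C, hprod, hdet, ← Finset.prod_sdiff (Finset.compl_subset_compl.2 hσR),
    compl_sdiff_compl]
  ring

end Adj

set_option maxHeartbeats 1000000 in
theorem statement8_general {ι κ : Type*} [Fintype ι] [DecidableEq ι] [Fintype κ] [DecidableEq κ]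
    (F : SimplicialFan ι κ) :
    (Adj F.U F.cones =
      (∏ ρ ∈ ((F.cones.filter fun σ => σ.card = Fintype.card κ).sup id)ᶜ, MvPolynomial.X ρ) *
        MvPolynomial.rename Subtype.val
          (Adj (fun (ρ : {ρ : ι // ρ ∈ (F.cones.filter fun σ => σ.card = Fintype.card κ).sup id}) (j : κ) => F.U ρ.1 j)
            (F.cones.image fun σ =>
              σ.subtype fun ρ => ρ ∈ (F.cones.filter fun σ => σ.card = Fintype.card κ).sup id))) ∧
    (∀ ρ : ι, ρ ∉ (F.cones.filter fun σ => σ.card = Fintype.card κ).sup id →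
      ∀ x : ι → ℂ, x ρ = 0 → MvPolynomial.aeval x (Adj F.U F.cones) = 0) ∧
    ∀ J : Finset ι, (↑J : Set ι) ⊆ ↑((F.cones.filter fun σ => σ.card = Fintype.card κ).sup id) →
      (∀ σ ∈ F.cones, σ.card = Fintype.card κ → ¬ J ⊆ σ) →
      ∀ x : ι → ℂ, (∀ ρ ∈ J, x ρ = 0) → MvPolynomial.aeval x (Adj F.U F.cones) = 0 := by
  have hR : ∀ σ ∈ F.cones, σ.card = Fintype.card κ →
      σ ⊆ (F.cones.filter fun σ => σ.card = Fintype.card κ).sup id :=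
    fun σ hσ hσd => Finset.le_sup (f := id) (Finset.mem_filter.2 ⟨hσ, hσd⟩)
  -- the instance elaborated in the statement; `Finset.Subtype.fintype` would only be defeq to
  -- it after unfolding the `sup`
  let := Subtype.fintype (· ∈ (F.cones.filter fun σ => σ.card = Fintype.card κ).sup id)
  refine ⟨Adj_eq_prod_compl_mul_rename _ _ _ (fun σ => F.card_le_of_mem) hR, ?_, ?_⟩
  · intro ρ hρ x hx
    exact aeval_Adj_eq_zero _ _ x fun σ hσ hσd => ⟨ρ, fun h => hρ (hR σ hσ hσd h), hx⟩
  · intro J _ hJ x hx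
    refine aeval_Adj_eq_zero _ _ x fun σ hσ hσd => ?_
    obtain ⟨ρ, hρJ, hρσ⟩ := Finset.not_subset.1 (hJ σ hσ hσd)
    exact ⟨ρ, hρσ, hx ρ hρJ⟩

set_option maxHeartbeats 1000000 in
/-- Let `Σ̄ ⊆ Σ` be the subfan of all `d`-dimensional cones and their
faces, with set of rays `R = Σ̄(1)` and ray matrix `Ū` the corresponding submatrix of `U`.
Then `Adj_{Σ,U} = (∏_{ρ ∈ Σ(1)∖Σ̄(1)} x_ρ) · Adj_{Σ̄,Ū}`, and the adjoint hypersurface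
contains the coordinate hyperplane `Λ_ρ` for every `ρ ∈ Σ(1)∖Σ̄(1)` as well as the
coordinate subspace `Λ_J` for every `J ∈ Σ̄ᶜ`. -/
theorem statement8 {ι κ : Type*} [Fintype ι] [DecidableEq ι] [Fintype κ] [DecidableEq κ]
    (F : SimplicialFan ι κ) (hrank : F.U.rank = Fintype.card κ) :
    (Adj F.U F.cones =
      (∏ ρ ∈ ((F.cones.filter fun σ => σ.card = Fintype.card κ).sup id)ᶜ, MvPolynomial.X ρ) *
        MvPolynomial.rename Subtype.val
          (Adj (fun (ρ : {ρ : ι // ρ ∈ (F.cones.filter fun σ => σ.card = Fintype.card κ).sup id}) (j : κ) => F.U ρ.1 j)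
            (F.cones.image fun σ =>
              σ.subtype fun ρ => ρ ∈ (F.cones.filter fun σ => σ.card = Fintype.card κ).sup id))) ∧
    (∀ ρ : ι, ρ ∉ (F.cones.filter fun σ => σ.card = Fintype.card κ).sup id →
      ∀ x : ι → ℂ, x ρ = 0 → MvPolynomial.aeval x (Adj F.U F.cones) = 0) ∧
    ∀ J : Finset ι, (↑J : Set ι) ⊆ ↑((F.cones.filter fun σ => σ.card = Fintype.card κ).sup id) →
      (∀ σ ∈ F.cones, σ.card = Fintype.card κ → ¬ J ⊆ σ) →
      ∀ x : ι → ℂ, (∀ ρ ∈ J, x ρ = 0) → MvPolynomial.aeval x (Adj F.U F.cones) = 0 :=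
  statement8_general F
end
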